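/- For every positive integer k, the sum of the entries of the sequence c^{(k)} equals 2(ρ^k - 1), where ρ = 1 + √2. -/
import Mathlib

noncomputable def rho : ℝ := 1 + Real.sqrt 2

noncomputable def silver (t : ℕ) : ℝ := rho ^ ((padicValNat 2 (t + 1) : ℤ) - 1) + 1

lemma rho_pos : 0 < rho := by
  have := Real.sqrt_nonneg 2; unfold rho; linarith

lemma rho_ne : rho ≠ 0 := ne_of_gt rho_pos

lemma rho_sq : rho * rho = 2 * rho + 1 := by
  have h : Real.sqrt 2 * Real.sqrt 2 = 2 := Real.mul_self_sqrt (by norm_num)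
  unfold rho; nlinarith [h]

lemma rho_inv : rho⁻¹ = rho - 2 := by
  have h : rho * (rho - 2) = 1 := by nlinarith [rho_sq]
  exact inv_eq_of_mul_eq_one_right h |>.symm ▸ rfl

lemma val_add_pow (k m : ℕ) (hm : m ≠ 0) (h : m < 2 ^ k) :
    padicValNat 2 (2 ^ k + m) = padicValNat 2 m := by
  haveI : Fact (Nat.Prime 2) := ⟨Nat.prime_two⟩
  set v := padicValNat 2 m with hv
  have hdvd : 2 ^ v ∣ m := pow_padicValNat_dvd
  have hvk : v < k := by
    have : 2 ^ v ≤ m := Nat.le_of_dvd (Nat.pos_of_ne_zero hm) hdvd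
    exact (Nat.pow_lt_pow_iff_right (by norm_num)).mp (lt_of_le_of_lt this h)
  apply le_antisymm
  · by_contra hlt
    push_neg at hlt
    have h1 : 2 ^ (v + 1) ∣ 2 ^ k + m := by
      rw [padicValNat_dvd_iff_le (by positivity)]
      exact hlt
    have h2 : 2 ^ (v + 1) ∣ 2 ^ k := pow_dvd_pow 2 hvk
    have h3 : 2 ^ (v + 1) ∣ m := (Nat.dvd_add_right h2).mp h1
    exact pow_succ_padicValNat_not_dvd hm h3
  · rw [← padicValNat_dvd_iff_le (by positivity)]
    exact dvd_add (pow_dvd_pow 2 hvk.le) hdvd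

lemma silver_shift (k i : ℕ) (hi : i < 2 ^ k - 1) : silver (2 ^ k + i) = silver i := by
  unfold silver
  rw [add_assoc, val_add_pow k (i + 1) (Nat.succ_ne_zero i)]
  omega

lemma silver_mid (k : ℕ) : silver (2 ^ k - 1) = rho ^ (k : ℤ) * rho⁻¹ + 1 := by
  haveI : Fact (Nat.Prime 2) := ⟨Nat.prime_two⟩
  unfold silver
  have h1 : 2 ^ k - 1 + 1 = 2 ^ k := by
    have := Nat.one_le_two_pow (n := k); omega
  rw [h1, padicValNat.prime_pow, zpow_sub₀ rho_ne, zpow_one, div_eq_mul_inv]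

lemma silver_sum (k : ℕ) (hk : 1 ≤ k) :
    ∑ j ∈ Finset.range (2 ^ k - 1), silver j = rho ^ k - 1 := by
  induction k, hk using Nat.le_induction with
  | base =>
    simp [silver, rho_inv]
    ring
  | succ k hk IH =>
    have hsplit : 2 ^ (k + 1) - 1 = 2 ^ k + (2 ^ k - 1) := by
      have := Nat.one_le_two_pow (n := k); ring_nf; omega
    rw [hsplit, Finset.sum_range_add]
    have h2 : (2 : ℕ) ^ k = (2 ^ k - 1) + 1 := by
      have := Nat.one_le_two_pow (n := k); omega
    rw [h2, Finset.sum_range_succ, ← h2]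
    rw [Finset.sum_congr rfl (fun i hi => silver_shift k i (Finset.mem_range.mp hi)), IH,
      silver_mid, rho_inv, zpow_natCast]
    ring_nf

noncomputable def csil : ℕ → ℕ → ℝ
  | 0, _ => 0
  | 1, _ => 2 * (rho - 1)
  | (k+2), j =>
      let n := 2 ^ (k + 1) - 1
      if j < n then silver j
      else if j = n then (1 + rho ^ (-(k + 1 : ℤ))) * (rho ^ k + 1)
      else rho * csil (k+1) (j - n - 1) - (rho - 1 - rho ^ (-(k + 1 : ℤ))) * silver (j - n - 1)

lemma csil_lt (m j : ℕ) (h : j < 2 ^ (m + 1) - 1) : csil (m + 2) j = silver j := by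
  simp only [csil]
  rw [if_pos h]

lemma csil_mid (m : ℕ) :
    csil (m + 2) (2 ^ (m + 1) - 1) = (1 + rho ^ (-(m + 1 : ℤ))) * (rho ^ m + 1) := by
  simp [csil]

lemma csil_gt (m i : ℕ) :
    csil (m + 2) (2 ^ (m + 1) - 1 + 1 + i) =
      rho * csil (m + 1) i - (rho - 1 - rho ^ (-(m + 1 : ℤ))) * silver i := by
  simp only [csil]
  have hn : ¬ (2 ^ (m + 1) - 1 + 1 + i < 2 ^ (m + 1) - 1) := by omega
  have hn2 : ¬ (2 ^ (m + 1) - 1 + 1 + i = 2 ^ (m + 1) - 1) := by omega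
  rw [if_neg hn, if_neg hn2]
  have harg : 2 ^ (m + 1) - 1 + 1 + i - (2 ^ (m + 1) - 1) - 1 = i := by omega
  rw [harg]

lemma csil_key (b r : ℝ) (hr : r ≠ 0) (hb : b ≠ 0) (h : r * r = 2 * r + 1) :
    (r * b - 1) + (1 + (b * r)⁻¹) * (b + 1) +
      (r * (2 * (r * b - 1)) - (r - 1 - (b * r)⁻¹) * (r * b - 1)) = 2 * (r * (r * b) - 1) := by
  field_simp
  ring_nf
  linear_combination (-(r * b ^ 2 + b)) * h

/-- Σ c^{(k)} = 2(ρ^k − 1) for every positive integer k. -/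
theorem csil_sum (k : ℕ) (hk : 1 ≤ k) :
    ∑ j ∈ Finset.range (2 ^ k - 1), csil k j = 2 * (rho ^ k - 1) := by
  induction k, hk using Nat.le_induction with
  | base => simp [csil]
  | succ k hk IH =>
    obtain ⟨m, rfl⟩ : ∃ m, k = m + 1 := ⟨k - 1, by omega⟩
    have hpow : 1 ≤ 2 ^ (m + 1) := Nat.one_le_two_pow
    have hsplit : 2 ^ (m + 1 + 1) - 1 = (2 ^ (m + 1) - 1 + 1) + (2 ^ (m + 1) - 1) := by
      ring_nf; omega
    rw [hsplit, Finset.sum_range_add, Finset.sum_range_succ]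
    rw [Finset.sum_congr rfl (fun j hj => csil_lt m j (Finset.mem_range.mp hj)),
      csil_mid m, Finset.sum_congr rfl (fun i _ => csil_gt m i),
      Finset.sum_sub_distrib, ← Finset.mul_sum, ← Finset.mul_sum,
      silver_sum (m + 1) (by omega), IH]
    have hz : rho ^ (-(m + 1 : ℤ)) = (rho ^ m * rho)⁻¹ := by
      rw [show (-(m + 1 : ℤ)) = -((m + 1 : ℕ) : ℤ) by push_cast; ring, zpow_neg,
        zpow_natCast, pow_succ]
    rw [hz]
    have hb : rho ^ m ≠ 0 := pow_ne_zero _ rho_ne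
    have e1 : rho ^ (m + 1) = rho * rho ^ m := by rw [pow_succ]; ring
    have e2 : rho ^ (m + 1 + 1) = rho * (rho * rho ^ m) := by rw [pow_succ, pow_succ]; ring
    rw [e1, e2]
    linear_combination csil_key (rho ^ m) rho rho_ne hb rho_sq
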